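/- arXiv:2305.10950 — 2 statements merged into one kernel-verified Lean document; each statement's English description precedes it below -/
import Mathlib

section
/- Let q ≥ 3 be an integer and let s = (1, 2, q) ∈ ℤ³. For k ∈ ℕ let N(k) denote the (finite) number of a = (a₁,a₂,a₃) ∈ ℤ³ with |a₁| + |a₂| + |a₃| = k and 2q ∣ (a₁ + 2a₂ + q·a₃), and let m_k = Σ_{r=0}^{⌊k/2⌋} binom(r+1, 1)·N(k−2r). Then {k ∈ ℕ : m_k > 0} = {k ∈ ℕ : k is even} ∪ {k ∈ ℕ : k is odd and k ≥ 3}. -/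
/-!
Since every term of `m k` is nonnegative, `m k > 0` iff `N (k - 2r) > 0` for some `r ≤ k / 2`.
The shell of one-norm `0` contains `0` and that of one-norm `3` contains `(2, -1, 0)`, so every
even `k` and every odd `k ≥ 3` occurs; the shell of one-norm `1` is empty, which excludes `k = 1`.
-/

theorem finite_setOf_sum_natAbs_eq (n k : ℕ) :
    {a : Fin n → ℤ | ∑ i, (a i).natAbs = k}.Finite := by
  refine (Set.Finite.pi fun _ => Set.finite_Icc (-(k : ℤ)) k).subset fun a ha i _ => ?_
  have hi : (a i).natAbs ≤ k :=
    ha ▸ Finset.single_le_sum (f := fun j => (a j).natAbs) (by simp) (Finset.mem_univ i)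
  simp only [Set.mem_Icc]
  omega

theorem sum_choose_one_mul_pos_iff (N : ℕ → ℕ) (k : ℕ) :
    0 < ∑ r ∈ Finset.range (k / 2 + 1), Nat.choose (r + 1) 1 * N (k - 2 * r) ↔
      ∃ r ≤ k / 2, 0 < N (k - 2 * r) := by
  simp only [Finset.sum_pos_iff, Finset.mem_range, Nat.lt_succ_iff, Nat.choose_one_right,
    Nat.mul_pos_iff_of_pos_left (Nat.succ_pos _)]

theorem setOf_exists_pos_sub_two_mul_eq {N : ℕ → ℕ} (h0 : 0 < N 0) (h1 : N 1 = 0)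
    (h3 : 0 < N 3) :
    {k | ∃ r ≤ k / 2, 0 < N (k - 2 * r)} = {k | Even k} ∪ {k | Odd k ∧ 3 ≤ k} := by
  ext k
  simp only [Set.mem_ofPred_eq, Set.mem_union]
  constructor
  · rintro ⟨r, hr, hpos⟩
    refine (Nat.even_or_odd k).imp_right fun hodd => ⟨hodd, ?_⟩
    by_contra! hk
    obtain rfl : k = 1 := by obtain ⟨t, rfl⟩ := hodd; omega
    obtain rfl : r = 0 := by omega
    exact hpos.ne' h1
  · rintro (⟨t, rfl⟩ | ⟨⟨t, rfl⟩, hk⟩)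
    · exact ⟨t, by omega, by rwa [show t + t - 2 * t = 0 by omega]⟩
    · exact ⟨t - 1, by omega, by rwa [show 2 * t + 1 - 2 * (t - 1) = 3 by omega]⟩

def lensShell (q k : ℕ) : Set (Fin 3 → ℤ) :=
  {a | ((a 0).natAbs + (a 1).natAbs + (a 2).natAbs) = k ∧
    ((2 * q : ℕ) : ℤ) ∣ (a 0 + 2 * a 1 + (q : ℤ) * a 2)}

theorem lensShell_finite (q k : ℕ) : (lensShell q k).Finite :=
  (finite_setOf_sum_natAbs_eq 3 k).subset fun a ha => by
    simpa only [Set.mem_ofPred_eq, Fin.sum_univ_three] using ha.1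

theorem zero_mem_lensShell (q : ℕ) : 0 ∈ lensShell q 0 := by
  simp [lensShell]

theorem mem_lensShell_three (q : ℕ) : ![2, -1, 0] ∈ lensShell q 3 := by
  simp [lensShell]

-- The vectors of one-norm 1 are `±eᵢ`, with values `±1, ±2, ±q` under `s = (1, 2, q)`,
-- none of them divisible by `2q ≥ 6`.
theorem lensShell_one_eq_empty {q : ℕ} (hq : 3 ≤ q) : lensShell q 1 = ∅ := by
  refine Set.eq_empty_iff_forall_notMem.mpr fun a ⟨hnorm, hdvd⟩ => ?_
  have ha2 : a 2 = 1 ∨ a 2 = 0 ∨ a 2 = -1 := by omega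
  rcases ha2 with h | h | h <;>
    rw [h] at hdvd <;>
    simp only [mul_one, mul_zero, mul_neg_one, add_zero] at hdvd <;>
    have := Int.eq_zero_of_abs_lt_dvd hdvd (by rw [abs_lt]; constructor <;> omega) <;>
    omega

/-- The lens orbifold `L(2q; 1, 2, q)` (`q ≥ 3`) has positive eigenvalue multiplicity
`m k` exactly for `k` even or `k` odd with `k ≥ 3`; hence it is eigenvalue equivalent
to the smooth lens spaces `L(q′; 1, 1, 2)`. -/
theorem lens_orbifold_eigenvalue_spectrum
    (q : ℕ) (hq : 3 ≤ q)
    (N : ℕ → ℕ)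
    (hN : ∀ k, N k = Set.ncard
      {a : Fin 3 → ℤ | ((a 0).natAbs + (a 1).natAbs + (a 2).natAbs) = k ∧
        ((2 * q : ℕ) : ℤ) ∣ (a 0 + 2 * a 1 + (q : ℤ) * a 2)})
    (m : ℕ → ℕ)
    (hm : ∀ k, m k = ∑ r ∈ Finset.range (k / 2 + 1),
      Nat.choose (r + 1) 1 * N (k - 2 * r)) :
    {k : ℕ | 0 < m k} = {k : ℕ | Even k} ∪ {k : ℕ | Odd k ∧ 3 ≤ k} := by
  have hN' : ∀ k, N k = (lensShell q k).ncard := hN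
  have hm' : {k | 0 < m k} = {k | ∃ r ≤ k / 2, 0 < N (k - 2 * r)} := by
    simp only [hm, sum_choose_one_mul_pos_iff]
  refine hm'.trans (setOf_exists_pos_sub_two_mul_eq ?_ ?_ ?_)
  · rw [hN', Set.ncard_pos (lensShell_finite q 0)]
    exact ⟨0, zero_mem_lensShell q⟩
  · rw [hN', lensShell_one_eq_empty hq, Set.ncard_empty]
  · rw [hN', Set.ncard_pos (lensShell_finite q 3)]
    exact ⟨_, mem_lensShell_three q⟩
end

section
/- Let n ≥ 3 be an integer and let r be a prime number with r > n². Then the tuple a = (1, 2, …, n−1, r − n(n−1)/2) ∈ ℤⁿ is useful mod r; that is, a is good mod d for every positive divisor d of r, and a is not reversible mod r. -/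
/-- The multiset of residues mod `r` of the entries of the tuple `a`. -/
def residues (r : ℕ) {n : ℕ} (a : Fin n → ℤ) : Multiset (ZMod r) :=
  (Finset.univ.val : Multiset (Fin n)).map fun i => ((a i : ZMod r))

/-- `a` is reversible mod `r` if for some shift `c` the multiset of residues of `a + c`
equals that of `-a`. -/
def Reversible (r : ℕ) {n : ℕ} (a : Fin n → ℤ) : Prop :=
  ∃ c : ℤ, residues r (fun i => a i + c) = residues r (fun i => -a i)

/-- `a` is univalent mod `r` if its entries are pairwise distinct mod `r`. -/
def Univalent (r : ℕ) {n : ℕ} (a : Fin n → ℤ) : Prop :=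
  Function.Injective fun i : Fin n => ((a i : ZMod r))

/-- `a` is good mod `r` if it is univalent or reversible mod `r`. -/
def Good (r : ℕ) {n : ℕ} (a : Fin n → ℤ) : Prop :=
  Univalent r a ∨ Reversible r a

/-- `a` is useful mod `r` if it is good mod every positive divisor of `r`
(hereditarily good) and irreversible mod `r`. -/
def Useful (r : ℕ) {n : ℕ} (a : Fin n → ℤ) : Prop :=
  (∀ d : ℕ, 0 < d → d ∣ r → Good d a) ∧ ¬ Reversible r a


/-! Modulo a prime `r`, the only divisors are `1`, where every tuple is reversible, and `r`
itself, where the tuple is univalent because its entries are distinct integers in `[0, r)`.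
The entries sum to `r ≡ 0`, so comparing sums in a reversal `a + c ~ -a` forces `n c ≡ 0`,
hence `c ≡ 0`: the residues of `a` would be closed under negation. But `1` is an entry while
`-1` is not, since every entry lies in `[1, r - 2]` (this needs `n(n-1)/2 ≥ 2`, i.e. `n ≥ 3`). -/

section Residues

variable {r n : ℕ} {a : Fin n → ℤ}

theorem sum_residues : (residues r a).sum = ∑ i, (a i : ZMod r) := rfl

theorem mem_residues {x : ZMod r} : x ∈ residues r a ↔ ∃ i, (a i : ZMod r) = x := by
  simp [residues]

theorem residues_neg : residues r (fun i => -a i) = (residues r a).map Neg.neg := by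
  simp [residues, Function.comp_def]

theorem reversible_one : Reversible 1 a :=
  ⟨0, Multiset.map_congr rfl fun _ _ => Subsingleton.elim _ _⟩

theorem Univalent.forall_good_of_prime (hp : r.Prime) (ha : Univalent r a) :
    ∀ d, d ∣ r → Good d a := by
  intro d hd
  rcases hp.eq_one_or_self_of_dvd d hd with rfl | rfl
  · exact Or.inr reversible_one
  · exact Or.inl ha

theorem univalent_of_injective_of_mem_Ico (ha : Function.Injective a)
    (hmem : ∀ i, a i ∈ Set.Ico 0 (r : ℤ)) : Univalent r a := by
  intro i j hij
  simp only [ZMod.intCast_eq_intCast_iff'] at hij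
  rwa [Int.emod_eq_of_lt (hmem i).1 (hmem i).2, Int.emod_eq_of_lt (hmem j).1 (hmem j).2,
    ha.eq_iff] at hij

theorem neg_one_notMem_residues (hmem : ∀ i, a i ∈ Set.Ioo 0 ((r : ℤ) - 1)) :
    -1 ∉ residues r a := by
  rw [mem_residues]
  rintro ⟨i, hi⟩
  have hdvd : (r : ℤ) ∣ a i + 1 := by
    rw [← ZMod.intCast_zmod_eq_zero_iff_dvd]
    push_cast [hi]
    ring
  have := Int.le_of_dvd (by linarith [(hmem i).1]) hdvd
  linarith [(hmem i).2]

theorem Reversible.residues_neg_eq [Fact r.Prime] (hn : (n : ZMod r) ≠ 0)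
    (hsum : ∑ i, (a i : ZMod r) = 0) (hrev : Reversible r a) :
    residues r (fun i => -a i) = residues r a := by
  obtain ⟨c, hc⟩ := hrev
  have hnc : (n : ZMod r) * c = 0 := by
    have := congrArg Multiset.sum hc
    simp only [sum_residues, Int.cast_add, Int.cast_neg, Finset.sum_add_distrib,
      Finset.sum_neg_distrib, hsum, Finset.sum_const, Finset.card_univ, Fintype.card_fin,
      nsmul_eq_mul] at this
    simpa using this
  have hc0 : (c : ZMod r) = 0 := (mul_eq_zero.mp hnc).resolve_left hn
  rw [← hc]
  exact Multiset.map_congr rfl fun i _ => by simp [hc0]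

end Residues

section StairTuple

def stairTuple (r n : ℕ) : Fin n → ℤ := fun i =>
  if (i : ℕ) = n - 1 then (r : ℤ) - (n * (n - 1) / 2 : ℕ) else (i : ℕ) + 1

variable {r n : ℕ}

theorem sum_stairTuple (hn : 0 < n) : ∑ i, stairTuple r n i = r := by
  obtain ⟨m, rfl⟩ : ∃ m, n = m + 1 := ⟨n - 1, by omega⟩
  have hgauss : ∑ i ∈ Finset.range m, (i + 1) = (m + 1) * m / 2 := by
    have h := Finset.sum_range_id (m + 1)
    rw [Finset.sum_range_succ'] at h
    simpa using h
  have hinit (i : Fin m) : stairTuple r (m + 1) i.castSucc = (i : ℕ) + 1 := by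
    simp [stairTuple, i.is_lt.ne]
  have hlast : stairTuple r (m + 1) (Fin.last m) = r - ((m + 1) * m / 2 : ℕ) := by
    simp [stairTuple]
  rw [Fin.sum_univ_castSucc]
  simp only [hinit, hlast]
  rw [Fin.sum_univ_eq_sum_range (fun i => (i : ℤ) + 1), ← hgauss]
  push_cast
  ring

theorem two_le_triangle (hn : 3 ≤ n) : 2 ≤ n * (n - 1) / 2 :=
  (Nat.le_div_iff_mul_le two_pos).mpr (by nlinarith [Nat.sub_add_cancel (by omega : 1 ≤ n)])

theorem triangle_add_le_sq : n * (n - 1) / 2 + n ≤ n ^ 2 := by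
  have := Nat.div_le_self (n * (n - 1)) 2
  have : n * (n - 1) + n = n ^ 2 := by
    rcases n with _ | n
    · rfl
    · simp only [Nat.add_sub_cancel]
      ring
  omega

theorem stairTuple_mem_Ioo (hn : 3 ≤ n) (hr : n ^ 2 < r) (i : Fin n) :
    stairTuple r n i ∈ Set.Ioo 0 ((r : ℤ) - 1) := by
  have := two_le_triangle hn
  have := triangle_add_le_sq (n := n)
  have := i.is_lt
  simp only [stairTuple, Set.mem_Ioo]
  split_ifs <;> omega

theorem stairTuple_injective (hr : n ^ 2 < r) : Function.Injective (stairTuple r n) := by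
  intro i j hij
  have := triangle_add_le_sq (n := n)
  have := i.is_lt
  have := j.is_lt
  simp only [stairTuple] at hij
  ext
  split_ifs at hij <;> omega

end StairTuple

/-- For `n ≥ 3` and a prime `r > n²`, the tuple `(1, 2, …, n−1, r − n(n−1)/2)` is
useful mod `r`. -/
theorem useful_tuple_of_prime_gt_sq
    (n r : ℕ) (hn : 3 ≤ n) (hp : r.Prime) (hr : n ^ 2 < r) :
    Useful r (fun i : Fin n =>
      if (i : ℕ) = n - 1 then (r : ℤ) - (n * (n - 1) / 2 : ℕ) else (i : ℕ) + 1) := by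
  have : Fact r.Prime := ⟨hp⟩
  change Useful r (stairTuple r n)
  have hmem := stairTuple_mem_Ioo hn hr
  have hnr : n < r := by nlinarith
  refine ⟨fun d _ hd => ?_, fun hrev => ?_⟩
  · refine (univalent_of_injective_of_mem_Ico (stairTuple_injective hr) fun i => ?_)
      |>.forall_good_of_prime hp d hd
    exact ⟨(hmem i).1.le, by linarith [(hmem i).2]⟩
  have hn0 : (n : ZMod r) ≠ 0 :=
    (ZMod.natCast_eq_zero_iff n r).not.mpr (Nat.not_dvd_of_pos_of_lt (by omega) hnr)
  have hsum : ∑ i, (stairTuple r n i : ZMod r) = 0 := by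
    rw [← Int.cast_sum, sum_stairTuple (by omega)]
    exact_mod_cast ZMod.natCast_self r
  have hone : (1 : ZMod r) ∈ residues r (stairTuple r n) :=
    mem_residues.mpr ⟨⟨0, by omega⟩, by simp [stairTuple, show 0 ≠ n - 1 by omega]⟩
  rw [← hrev.residues_neg_eq hn0 hsum, residues_neg] at hone
  exact neg_one_notMem_residues hmem (by simpa using Multiset.mem_map_of_mem Neg.neg hone)
end
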